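/- Let M ≥ 1 and L ≥ 1 be integers, N = M·L, and let Ω̄_1, …, Ω̄_M ∈ ℝ be the steering angles of the M sparse subarrays. Define the full-array codeword w ∈ ℂ^N by w_{nM + (m−1)} = e^{−iπ(m−1)Ω̄_m} · e^{−iπMnΩ̄_m} for n = 0, …, L−1 and m = 1, …, M (interleaved subarray structure). Then for every Ω ∈ ℝ, the full-array response satisfies v(Ω,N)^H w = ∑_{m=1}^{M} e^{iπ(m−1)(Ω − Ω̄_m)} · A_{M,L}(Ω − Ω̄_m), i.e., it decomposes as the sum of the M sparse-subarray array factors with explicit per-subarray phase offsets. -/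

import Mathlib

open Finset

/-- The sparse-subarray array factor `A_{M,L}(δ) = ∑_{n=0}^{L-1} e^{iπMnδ}`. -/
noncomputable def arrayFactor (M L : ℕ) (δ : ℝ) : ℂ :=
  ∑ n ∈ Finset.range L, Complex.exp ((Real.pi * M * n * δ : ℝ) * Complex.I)

theorem Finset.sum_range_mul_eq_sum_residues {β : Type*} [AddCommMonoid β] (M L : ℕ)
    (g : ℕ → β) :
    ∑ k ∈ range (M * L), g k = ∑ m ∈ range M, ∑ n ∈ range L, g (n * M + m) := by
  induction L with
  | zero => simp
  | succ L ih =>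
    rw [Nat.mul_succ, sum_range_add, ih, Nat.mul_comm M L]
    simp only [sum_range_succ, sum_add_distrib]

theorem conj_steering_mul_codeword (M n m : ℕ) (Ω Ωbar : ℝ) :
    (starRingEnd ℂ) (Complex.exp (-((Real.pi * ↑(n * M + m) * Ω : ℝ)) * Complex.I)) *
        (Complex.exp (-((Real.pi * m * Ωbar : ℝ)) * Complex.I) *
          Complex.exp (-((Real.pi * M * n * Ωbar : ℝ)) * Complex.I))
      = Complex.exp ((Real.pi * m * (Ω - Ωbar) : ℝ) * Complex.I) *
          Complex.exp ((Real.pi * M * n * (Ω - Ωbar) : ℝ) * Complex.I) := by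
  simp only [← Complex.exp_conj, ← Complex.exp_add, map_mul, map_neg, Complex.conj_ofReal,
    Complex.conj_I]
  congr 1
  push_cast
  ring

theorem sparse_subarray_response_decomposition_general (M L : ℕ)
    (N : ℕ) (hN : N = M * L) (Ωbar : ℕ → ℝ) (w : ℕ → ℂ)
    (hw : ∀ n m : ℕ, n < L → m < M →
      w (n * M + m) = Complex.exp (-((Real.pi * m * Ωbar m : ℝ)) * Complex.I) *
        Complex.exp (-((Real.pi * M * n * Ωbar m : ℝ)) * Complex.I))
    (Ω : ℝ) :
    ∑ k ∈ Finset.range N,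
        (starRingEnd ℂ) (Complex.exp (-((Real.pi * k * Ω : ℝ)) * Complex.I)) * w k
      = ∑ m ∈ Finset.range M,
          Complex.exp ((Real.pi * m * (Ω - Ωbar m) : ℝ) * Complex.I) *
            arrayFactor M L (Ω - Ωbar m) := by
  subst hN
  rw [sum_range_mul_eq_sum_residues]
  refine sum_congr rfl fun m hm => ?_
  rw [arrayFactor, mul_sum]
  refine sum_congr rfl fun n hn => ?_
  rw [hw n m (mem_range.1 hn) (mem_range.1 hm), conj_steering_mul_codeword]

/-- Sparse-subarray (interleaved) codeword decomposition.  Subarray `m` (here indexed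
`m = 0, …, M−1`, corresponding to `m−1` in the paper) occupies the antennas with indices
`≡ m (mod M)` and is steered to `Ω̄_m`; the codeword entries are
`w_{nM+m} = e^{−iπ m Ω̄_m} · e^{−iπ M n Ω̄_m}`.  Then for every spatial angle `Ω`, the
full-array response `v(Ω,N)^H w` (with `v(Ω,N)_k = e^{−iπkΩ}`) equals
`∑_{m} e^{iπ m (Ω−Ω̄_m)} · A_{M,L}(Ω−Ω̄_m)`. -/
theorem sparse_subarray_response_decomposition (M L : ℕ) (hM : 1 ≤ M) (hL : 1 ≤ L)
    (N : ℕ) (hN : N = M * L) (Ωbar : ℕ → ℝ) (w : ℕ → ℂ)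
    (hw : ∀ n m : ℕ, n < L → m < M →
      w (n * M + m) = Complex.exp (-((Real.pi * m * Ωbar m : ℝ)) * Complex.I) *
        Complex.exp (-((Real.pi * M * n * Ωbar m : ℝ)) * Complex.I))
    (Ω : ℝ) :
    ∑ k ∈ Finset.range N,
        (starRingEnd ℂ) (Complex.exp (-((Real.pi * k * Ω : ℝ)) * Complex.I)) * w k
      = ∑ m ∈ Finset.range M,
          Complex.exp ((Real.pi * m * (Ω - Ωbar m) : ℝ) * Complex.I) *
            arrayFactor M L (Ω - Ωbar m) :=
  sparse_subarray_response_decomposition_general M L N hN Ωbar w hw Ω
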